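/- (ResInter₂) In the muddy children axiomatization with m+1 muddy children: ⊢ [¤] TRUE → [*]^m E_G λ_{m+1}, i.e., after Father's announcement and m repetitions of his injunction, every child knows there are at least m+1 muddy children. -/

import Mathlib

/-- Formulas of dynamic epistemic logic with common knowledge. -/
inductive Form (Atom Agent Event : Type) : Type
  | atom : Atom → Form Atom Agent Event
  | tru  : Form Atom Agent Event
  | imp  : Form Atom Agent Event → Form Atom Agent Event → Form Atom Agent Event
  | and  : Form Atom Agent Event → Form Atom Agent Event → Form Atom Agent Event
  | or   : Form Atom Agent Event → Form Atom Agent Event → Form Atom Agent Event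
  | not  : Form Atom Agent Event → Form Atom Agent Event
  | K    : Agent → Form Atom Agent Event → Form Atom Agent Event
  | C    : List Agent → Form Atom Agent Event → Form Atom Agent Event
  | E    : List Agent → Form Atom Agent Event → Form Atom Agent Event
  | box  : Event → Form Atom Agent Event → Form Atom Agent Event

namespace Form

variable {Atom Agent Event : Type}

def iff (p q : Form Atom Agent Event) : Form Atom Agent Event :=
  Form.and (Form.imp p q) (Form.imp q p)

/-- The conjunction ⋀_{i ∈ G} K_i p. -/
def conjK (G : List Agent) (p : Form Atom Agent Event) : Form Atom Agent Event :=
  match G with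
  | [] => Form.tru
  | i :: G' => Form.and (Form.K i p) (conjK G' p)

/-- Classical boolean evaluation, treating atoms and modal subformulas as opaque
(evaluated by the valuation `v`).  A formula is a classical tautology iff it
evaluates to `true` under every such valuation. -/
def evalC (v : Form Atom Agent Event → Bool) : Form Atom Agent Event → Bool
  | Form.tru => true
  | Form.imp p q => !(evalC v p) || evalC v q
  | Form.and p q => evalC v p && evalC v q
  | Form.or p q => evalC v p || evalC v q
  | Form.not p => !(evalC v p)
  | p => v p

/-- Hilbert-style derivability for the system 𝒯^{C[α]}_G, with an extra set `Ax`
of proper axioms. -/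
inductive Prf (Ax : Form Atom Agent Event → Prop) : Form Atom Agent Event → Prop
  | ax {p} : Ax p → Prf Ax p
  | taut {p} : (∀ v, evalC v p = true) → Prf Ax p
  | mp {p q} : Prf Ax p → Prf Ax (Form.imp p q) → Prf Ax q
  | kK (i : Agent) (p q : Form Atom Agent Event) :
      Prf Ax (Form.imp (Form.K i p) (Form.imp (Form.K i (Form.imp p q)) (Form.K i q)))
  | tK (i : Agent) (p : Form Atom Agent Event) : Prf Ax (Form.imp (Form.K i p) p)
  | genK (i : Agent) {p} : Prf Ax p → Prf Ax (Form.K i p)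
  | kBox (a : Event) (p q : Form Atom Agent Event) :
      Prf Ax (Form.imp (Form.box a p) (Form.imp (Form.box a (Form.imp p q)) (Form.box a q)))
  | tBox (a : Event) (p : Form Atom Agent Event) : Prf Ax (Form.imp (Form.box a p) p)
  | genBox (a : Event) {p} : Prf Ax p → Prf Ax (Form.box a p)
  | defE (G : List Agent) (p : Form Atom Agent Event) :
      Prf Ax (Form.iff (Form.E G p) (Form.conjK G p))
  | fixC (G : List Agent) (p : Form Atom Agent Event) :
      Prf Ax (Form.imp (Form.C G p) (Form.and p (Form.E G (Form.C G p))))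
  | gfpC {G : List Agent} {p r : Form Atom Agent Event} :
      Prf Ax (Form.imp r (Form.and p (Form.E G r))) → Prf Ax (Form.imp r (Form.C G p))
  | kt1 (i : Agent) (a : Event) (p : Form Atom Agent Event) :
      Prf Ax (Form.imp (Form.K i (Form.box a p)) (Form.box a (Form.K i p)))

/-- n-fold iterated shared knowledge E_G^n. -/
def iterE (G : List Agent) : ℕ → Form Atom Agent Event → Form Atom Agent Event
  | 0, p => p
  | n+1, p => Form.E G (iterE G n p)

/-- k-fold iterated dynamic modality [α]^k. -/
def iterBox (a : Event) : ℕ → Form Atom Agent Event → Form Atom Agent Event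
  | 0, p => p
  | n+1, p => Form.box a (iterBox a n p)

end Form

/-- The empty set of proper axioms. -/
def NoAx {Atom Agent Event : Type} : Form Atom Agent Event → Prop := fun _ => False

/-- Atomic propositions of the muddy children puzzle. -/
inductive MCAtom : Type
  | lam : ℕ → MCAtom   -- at least j children are muddy
  | eps : ℕ → MCAtom   -- exactly j children are muddy
  | mu  : ℕ → MCAtom   -- child i is muddy

abbrev MForm (Event : Type) := Form MCAtom ℕ Event

def lam {Event : Type} (j : ℕ) : MForm Event := Form.atom (MCAtom.lam j)
def eps {Event : Type} (j : ℕ) : MForm Event := Form.atom (MCAtom.eps j)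
def mud {Event : Type} (i : ℕ) : MForm Event := Form.atom (MCAtom.mu i)

/-!
Every step of the induction turns one level of shared knowledge into one repetition of the
injunction `[*]`. From the announcement `[¤]` we get common knowledge of `λ₁`, hence
`E_G^{m+1} λ₁`. Reading `E_G^{k+1} λ_j` as `E_G^{k-1} E_G E_G λ_j`, the innermost `E_G E_G λ_j`
yields `[*] E_G λ_{j+1}`: after `[*]` everyone still knows `λ_j` (persistence, KT1) and knows `¬ε_j`
(MC2), which together give `λ_{j+1}` (EQ). KT1 then moves the new `[*]` out through the outer
`E_G`s, so `m` rounds take `E_G^{m+1} λ₁` to `[*]^m E_G λ_{m+1}`.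
-/

namespace Form

variable {Atom Agent Event : Type} {Ax : Form Atom Agent Event → Prop}

namespace Prf

theorem mp₂ {p q r : Form Atom Agent Event} (hp : Prf Ax p) (hq : Prf Ax q)
    (h : ∀ v, evalC v (p.imp (q.imp r)) = true) : Prf Ax r :=
  hq.mp (hp.mp (taut h))

theorem imp_self (p : Form Atom Agent Event) : Prf Ax (p.imp p) :=
  taut fun v => by grind [evalC]

theorem imp_intro {p q : Form Atom Agent Event} (h : Prf Ax q) : Prf Ax (p.imp q) :=
  h.mp (taut fun v => by grind [evalC])

theorem imp_trans {p q r : Form Atom Agent Event} (hpq : Prf Ax (p.imp q))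
    (hqr : Prf Ax (q.imp r)) : Prf Ax (p.imp r) :=
  mp₂ hpq hqr fun v => by grind [evalC]

theorem imp_and {a p q : Form Atom Agent Event} (hp : Prf Ax (a.imp p))
    (hq : Prf Ax (a.imp q)) : Prf Ax (a.imp (p.and q)) :=
  mp₂ hp hq fun v => by grind [evalC]

theorem iff_mp {p q : Form Atom Agent Event} (h : Prf Ax (p.iff q)) : Prf Ax (p.imp q) :=
  h.mp (taut fun v => by grind [evalC, Form.iff])

theorem iff_mpr {p q : Form Atom Agent Event} (h : Prf Ax (p.iff q)) : Prf Ax (q.imp p) :=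
  h.mp (taut fun v => by grind [evalC, Form.iff])

end Prf

structure IsNormal (Ax : Form Atom Agent Event → Prop)
    (M : Form Atom Agent Event → Form Atom Agent Event) : Prop where
  distrib : ∀ p q, Prf Ax ((M p).imp ((M (p.imp q)).imp (M q)))
  nec : ∀ {p}, Prf Ax p → Prf Ax (M p)

namespace IsNormal

variable {M N : Form Atom Agent Event → Form Atom Agent Event}

theorem mono (hM : IsNormal Ax M) {p q : Form Atom Agent Event} (h : Prf Ax (p.imp q)) :
    Prf Ax ((M p).imp (M q)) :=
  Prf.mp₂ (hM.nec h) (hM.distrib p q) fun v => by grind [evalC]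

theorem and_imp (hM : IsNormal Ax M) (p q : Form Atom Agent Event) :
    Prf Ax (((M p).and (M q)).imp (M (p.and q))) :=
  Prf.mp₂ (hM.mono (Prf.taut fun v => by grind [evalC] : Prf Ax (p.imp (q.imp (p.and q)))))
    (hM.distrib q (p.and q)) fun v => by grind [evalC]

theorem comp (hM : IsNormal Ax M) (hN : IsNormal Ax N) : IsNormal Ax (fun p => M (N p)) where
  distrib p q := Prf.mp₂ (hM.mono (hN.distrib p q)) (hM.distrib (N (p.imp q)) (N q))
    fun v => by grind [evalC]
  nec h := hM.nec (hN.nec h)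

theorem and (hM : IsNormal Ax M) (hN : IsNormal Ax N) :
    IsNormal Ax (fun p => (M p).and (N p)) where
  distrib p q := Prf.mp₂ (hM.distrib p q) (hN.distrib p q) fun v => by grind [evalC]
  nec h := Prf.mp₂ (hM.nec h) (hN.nec h) fun v => by grind [evalC]

theorem of_iff (hN : IsNormal Ax N) (h : ∀ p, Prf Ax ((M p).iff (N p))) : IsNormal Ax M where
  distrib p q :=
    have hq : Prf Ax (((N (p.imp q)).imp (N q)).imp ((M (p.imp q)).imp (M q))) :=
      Prf.mp₂ (h (p.imp q)) (h q) fun v => by grind [evalC, Form.iff]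
    ((h p).iff_mp.imp_trans (hN.distrib p q)).imp_trans hq
  nec hp := (hN.nec hp).mp (h _).iff_mpr

end IsNormal

theorem isNormal_K (i : Agent) : IsNormal Ax (K i) := ⟨Prf.kK i, Prf.genK i⟩

theorem isNormal_box (a : Event) : IsNormal Ax (box a) := ⟨Prf.kBox a, Prf.genBox a⟩

theorem isNormal_conjK (G : List Agent) : IsNormal Ax (conjK G) := by
  induction G with
  | nil => exact ⟨fun _ _ => Prf.taut fun v => by grind [evalC, conjK],
      fun _ => Prf.taut fun v => by grind [evalC, conjK]⟩
  | cons i G ih => exact (isNormal_K i).and ih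

theorem isNormal_E (G : List Agent) : IsNormal Ax (E G) :=
  (isNormal_conjK G).of_iff (Prf.defE G)

theorem isNormal_iterE (G : List Agent) (n : ℕ) : IsNormal Ax (iterE G n) := by
  induction n with
  | zero => exact ⟨fun _ _ => Prf.taut fun v => by grind [evalC, iterE], id⟩
  | succ n ih => exact (isNormal_E G).comp ih

theorem E_imp_self {G : List Agent} (hG : G ≠ []) (p : Form Atom Agent Event) :
    Prf Ax ((E G p).imp p) := by
  obtain ⟨i, G, rfl⟩ := List.exists_cons_of_ne_nil hG
  exact (Prf.defE _ p).iff_mp.imp_trans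
    ((Prf.taut fun v => by grind [evalC, conjK]).imp_trans (Prf.tK i p))

theorem conjK_box_imp_box_conjK (G : List Agent) (a : Event) (p : Form Atom Agent Event) :
    Prf Ax ((conjK G (box a p)).imp (box a (conjK G p))) := by
  induction G with
  | nil => exact Prf.imp_intro ((isNormal_box a).nec (Prf.taut fun _ => rfl))
  | cons i G ih =>
    have hK : Prf Ax ((conjK (i :: G) (box a p)).imp ((box a (K i p)).and (box a (conjK G p)))) :=
      Prf.mp₂ (Prf.kt1 i a p) ih fun v => by grind [evalC, conjK]
    exact hK.imp_trans ((isNormal_box a).and_imp _ _)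

theorem E_box_imp_box_E (G : List Agent) (a : Event) (p : Form Atom Agent Event) :
    Prf Ax ((E G (box a p)).imp (box a (E G p))) :=
  (Prf.defE G _).iff_mp.imp_trans
    ((conjK_box_imp_box_conjK G a p).imp_trans ((isNormal_box a).mono (Prf.defE G p).iff_mpr))

theorem iterE_box_imp_box_iterE (G : List Agent) (a : Event) (p : Form Atom Agent Event)
    (n : ℕ) : Prf Ax ((iterE G n (box a p)).imp (box a (iterE G n p))) := by
  induction n with
  | zero => exact Prf.imp_self _
  | succ n ih => exact ((isNormal_E G).mono ih).imp_trans (E_box_imp_box_E G a _)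

theorem C_imp_iterE (G : List Agent) (p : Form Atom Agent Event) (n : ℕ) :
    Prf Ax ((C G p).imp (iterE G n p)) := by
  have hfix := Prf.fixC (Ax := Ax) G p
  induction n with
  | zero => exact hfix.imp_trans (Prf.taut fun v => by grind [evalC, iterE])
  | succ n ih =>
    have hCE : Prf Ax ((C G p).imp (E G (C G p))) :=
      hfix.imp_trans (Prf.taut fun v => by grind [evalC])
    exact hCE.imp_trans ((isNormal_E G).mono ih)

theorem iterE_succ_apply (G : List Agent) (n : ℕ) (p : Form Atom Agent Event) :
    iterE G (n + 1) p = iterE G n (E G p) := by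
  induction n with
  | zero => rfl
  | succ n ih => exact congrArg (E G) ih

theorem E_E_imp_box_E {G : List Agent} (hG : G ≠ []) {a : Event} {l l' e : Form Atom Agent Event}
    (hpers : Prf Ax (l.imp (box a l)))
    (hlearn : Prf Ax ((E G (E G l)).imp (box a (E G (not e)))))
    (hexact : Prf Ax (e.iff (l.and (not l')))) :
    Prf Ax ((E G (E G l)).imp (box a (E G l'))) := by
  have hE := isNormal_E (Ax := Ax) G
  have hB := isNormal_box (Ax := Ax) a
  have hkeep : Prf Ax ((E G (E G l)).imp (box a (E G l))) :=
    (E_imp_self hG _).imp_trans ((hE.mono hpers).imp_trans (E_box_imp_box_E G a l))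
  have hnext : Prf Ax ((l.and (not e)).imp l') :=
    hexact.mp (Prf.taut fun v => by grind [evalC, Form.iff])
  exact ((hkeep.imp_and hlearn).imp_trans (hB.and_imp _ _)).imp_trans
    (hB.mono ((hE.and_imp _ _).imp_trans (hE.mono hnext)))

theorem iterE_imp_iterBox {G : List Agent} {a : Event} (p : ℕ → Form Atom Agent Event)
    (hstep : ∀ j, Prf Ax ((E G (E G (p j))).imp (box a (E G (p (j + 1)))))) (k j : ℕ) :
    Prf Ax ((iterE G (k + 1) (p j)).imp (iterBox a k (E G (p (k + j))))) := by
  induction k generalizing j with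
  | zero => rw [Nat.zero_add j]; exact Prf.imp_self _
  | succ k ih =>
    have hfirst : Prf Ax ((iterE G (k + 2) (p j)).imp (box a (iterE G (k + 1) (p (j + 1))))) := by
      rw [iterE_succ_apply, iterE_succ_apply, iterE_succ_apply]
      exact ((isNormal_iterE G k).mono (hstep j)).imp_trans (iterE_box_imp_box_iterE G a _ k)
    rw [show k + 1 + j = k + (j + 1) by omega]
    exact hfirst.imp_trans ((isNormal_box a).mono (ih (j + 1)))

end Form

/-- (ResInter₂) With m+1 muddy children: ⊢ [¤] TRUE → [*]^m E_G λ_{m+1}. -/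
theorem resInter2 {Event : Type} (Ax : MForm Event → Prop)
    (G : List ℕ) (hG : G ≠ []) (pt st : Event) (m : ℕ)
    (hMC11 : Form.Prf Ax (Form.imp (Form.box pt Form.tru) (Form.C G (lam 1))))
    (hMC2 : ∀ j : ℕ, 1 ≤ j →
      Form.Prf Ax (Form.imp (Form.E G (Form.E G (lam j)))
        (Form.box st (Form.E G (Form.not (eps j))))))
    (hPers : ∀ j : ℕ, Form.Prf Ax (Form.imp (lam j) (Form.box st (lam j))))
    (hEQ : ∀ j : ℕ, Form.Prf Ax (Form.iff (eps j) (Form.and (lam j) (Form.not (lam (j+1)))))) :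
    Form.Prf Ax (Form.imp (Form.box pt Form.tru)
      (Form.iterBox st m (Form.E G (lam (m+1))))) := by
  have hrounds := Form.iterE_imp_iterBox (fun j => lam (j + 1))
    (fun j => Form.E_E_imp_box_E hG (hPers (j + 1)) (hMC2 (j + 1) (Nat.le_add_left 1 j))
      (hEQ (j + 1))) m 0
  exact (hMC11.imp_trans (Form.C_imp_iterE G (lam 1) (m + 1))).imp_trans hrounds
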